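/- arXiv:2507.06721 — 5 statements merged into one kernel-verified Lean document; each statement's English description precedes it below -/
import Mathlib

section
/- Let G=(V,E) be a weighted undirected graph, S a nonempty subset of V, and for each vertex u let h(u) = min_{s∈S} d(u,s). Let G_S be the subgraph of G keeping each edge (u,v) if its weight is at most min(h(u), h(v)). If the shortest path P(u,v) between u and v in G is not entirely contained in G_S, then max(h(u), h(v)) ≤ d_G(u,v). -/
/-- The weight of a walk: sum of the weights of its edges. -/
noncomputable def walkWeight {V : Type*} (G : SimpleGraph V) (w : V → V → ℝ)
    {u v : V} (p : G.Walk u v) : ℝ :=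
  (p.darts.map (fun e => w e.fst e.snd)).sum

/-- Weighted shortest-path distance: infimum of weights of walks from `u` to `v`. -/
noncomputable def wdist {V : Type*} (G : SimpleGraph V) (w : V → V → ℝ)
    (u v : V) : ℝ :=
  sInf {x | ∃ p : G.Walk u v, walkWeight G w p = x}

/-- `h_S(u) = d(u,S)`, the distance from `u` to the set `S`. -/
noncomputable def hSdist {V : Type*} (G : SimpleGraph V) (w : V → V → ℝ)
    (S : Set V) (u : V) : ℝ :=
  sInf {x | ∃ s ∈ S, wdist G w u s = x}

section aux
variable {V : Type*} (G : SimpleGraph V) (w : V → V → ℝ)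
variable (hw_nonneg : ∀ x y, 0 ≤ w x y)

include hw_nonneg in
lemma walkWeight_nonneg {u v : V} (p : G.Walk u v) : 0 ≤ walkWeight G w p := by
  apply List.sum_nonneg
  intro x hx
  obtain ⟨d, _, rfl⟩ := List.mem_map.1 hx
  exact hw_nonneg _ _

include hw_nonneg in
lemma wdist_nonneg (u v : V) : 0 ≤ wdist G w u v := by
  apply Real.sInf_nonneg
  rintro x ⟨p, rfl⟩
  exact walkWeight_nonneg G w hw_nonneg p

include hw_nonneg in
lemma wdist_le {u v : V} (p : G.Walk u v) : wdist G w u v ≤ walkWeight G w p := by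
  apply csInf_le
  · exact ⟨0, by rintro x ⟨p, rfl⟩; exact walkWeight_nonneg G w hw_nonneg p⟩
  · exact ⟨p, rfl⟩

lemma walkWeight_append {u x v : V} (p : G.Walk u x) (q : G.Walk x v) :
    walkWeight G w (p.append q) = walkWeight G w p + walkWeight G w q := by
  simp [walkWeight, SimpleGraph.Walk.darts_append]

lemma walkWeight_reverse (hw_symm : ∀ x y, w x y = w y x) {u v : V} (p : G.Walk u v) :
    walkWeight G w p.reverse = walkWeight G w p := by
  simp only [walkWeight, SimpleGraph.Walk.darts_reverse, List.map_reverse,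
    List.sum_reverse, List.map_map]
  congr 1
  apply List.map_congr_left
  intro d _
  exact (hw_symm _ _).symm

include hw_nonneg in
lemma wdist_le_walk_add {u x : V} (q : G.Walk u x) (s : V) :
    wdist G w u s ≤ walkWeight G w q + wdist G w x s := by
  by_cases h : Nonempty (G.Walk x s)
  · obtain ⟨r0⟩ := h
    have key : ∀ y ∈ {y | ∃ p : G.Walk x s, walkWeight G w p = y},
        wdist G w u s - walkWeight G w q ≤ y := by
      rintro y ⟨r, rfl⟩
      have := wdist_le G w hw_nonneg (q.append r)
      rw [walkWeight_append] at this
      linarith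
    have h3 : wdist G w u s - walkWeight G w q ≤ wdist G w x s :=
      le_csInf ⟨walkWeight G w r0, r0, rfl⟩ key
    linarith
  · have he : {y | ∃ p : G.Walk u s, walkWeight G w p = y} = ∅ := by
      rw [Set.eq_empty_iff_forall_notMem]
      rintro y ⟨p, rfl⟩
      exact h ⟨q.reverse.append p⟩
    rw [wdist, he, Real.sInf_empty]
    have := walkWeight_nonneg G w hw_nonneg q
    have := wdist_nonneg G w hw_nonneg x s
    linarith

include hw_nonneg in
lemma hS_le_walk (S : Set V) (hS_ne : S.Nonempty) {u x : V} (q : G.Walk u x) :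
    hSdist G w S u ≤ walkWeight G w q + hSdist G w S x := by
  obtain ⟨s0, hs0⟩ := hS_ne
  have key : ∀ y ∈ {y | ∃ s ∈ S, wdist G w x s = y},
      hSdist G w S u - walkWeight G w q ≤ y := by
    rintro y ⟨s, hs, rfl⟩
    have h1 : hSdist G w S u ≤ wdist G w u s := by
      apply csInf_le
      · exact ⟨0, by rintro z ⟨s', _, rfl⟩; exact wdist_nonneg G w hw_nonneg u s'⟩
      · exact ⟨s, hs, rfl⟩
    have h2 := wdist_le_walk_add G w hw_nonneg q s
    linarith
  have h3 : hSdist G w S u - walkWeight G w q ≤ hSdist G w S x :=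
    le_csInf ⟨wdist G w x s0, s0, hs0, rfl⟩ key
  linarith

lemma walk_split {u v : V} (p : G.Walk u v) (d : G.Dart) (hd : d ∈ p.darts) :
    ∃ (q : G.Walk u d.fst) (r : G.Walk d.snd v),
      walkWeight G w p = walkWeight G w q + w d.fst d.snd + walkWeight G w r := by
  induction p with
  | nil => simp at hd
  | @cons a b c h p ih =>
    rw [SimpleGraph.Walk.darts_cons, List.mem_cons] at hd
    rcases hd with rfl | hd
    · exact ⟨SimpleGraph.Walk.nil, p, by simp [walkWeight]⟩
    · obtain ⟨q, r, hq⟩ := ih hd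
      refine ⟨SimpleGraph.Walk.cons h q, r, ?_⟩
      simp only [walkWeight, SimpleGraph.Walk.darts_cons, List.map_cons, List.sum_cons] at *
      linarith

end aux


/-- If a shortest path `P(u,v)` in `G` is not entirely contained in `G_S`
(i.e., some edge `(x,y)` of it has `w x y > h_S x` and `w x y > h_S y`),
then `max (h_S u) (h_S v) ≤ d_G(u,v)`. -/
theorem stmt0 {V : Type*} [Fintype V] (G : SimpleGraph V) (w : V → V → ℝ)
    (hw_symm : ∀ x y, w x y = w y x) (hw_nonneg : ∀ x y, 0 ≤ w x y)
    (S : Set V) (hS_ne : S.Nonempty)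
    (u v : V) (P : G.Walk u v)
    (hP : walkWeight G w P = wdist G w u v)
    (hnot : ¬ ∀ e ∈ P.darts,
      w e.fst e.snd ≤ hSdist G w S e.fst ∨ w e.fst e.snd ≤ hSdist G w S e.snd) :
    max (hSdist G w S u) (hSdist G w S v) ≤ wdist G w u v := by
  push_neg at hnot
  obtain ⟨d, hd, hx, hy⟩ := hnot
  obtain ⟨q, r, hsplit⟩ := walk_split G w P d hd
  have hqn := walkWeight_nonneg G w hw_nonneg q
  have hrn := walkWeight_nonneg G w hw_nonneg r
  have h1 : hSdist G w S u ≤ walkWeight G w q + hSdist G w S d.fst :=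
    hS_le_walk G w hw_nonneg S hS_ne q
  have h2 : hSdist G w S v ≤ walkWeight G w r.reverse + hSdist G w S d.snd :=
    hS_le_walk G w hw_nonneg S hS_ne r.reverse
  rw [walkWeight_reverse G w hw_symm] at h2
  rw [← hP]
  apply max_le <;> linarith
end

section
/- Let d be a metric on V, S ⊆ V, h(u)=d(u,S) attained at p(u) ∈ S, H an α-spanner of G augmented with edges (u,p(u)) of weight h(u), and suppose an oracle returns on any pair s₁,s₂ ∈ S an estimate D(s₁,s₂) with d_H(s₁,s₂) ≤ D(s₁,s₂) ≤ β·d_H(s₁,s₂). If max(h(u),h(v)) ≤ d(u,v), then h(u) + D(p(u),p(v)) + h(v) ≤ (2 + β(α+2))·d(u,v). In particular with α = 2k′−1 and β = 2k″−1 satisfying 2 + (2k″−1)(2k′+1) ≤ 2k−1, the estimate is at most (2k−1)·d(u,v). -/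
/-- Composing an `α`-spanner `H` (augmented with pivot edges) with a `β`-stretch
oracle `D` on `S × S`: if `max(h u, h v) ≤ d u v`, then
`h u + D(p u, p v) + h v ≤ (2 + β(α+2))·d(u,v)`; in particular, with
`α = 2k′−1`, `β = 2k″−1` and `2 + (2k″−1)(2k′+1) ≤ 2k−1`, the estimate is at
most `(2k−1)·d(u,v)`. -/
theorem stmt7 {V : Type*} (d dH : V → V → ℝ) (S : Set V) (h : V → ℝ) (p : V → V)
    (hp_mem : ∀ u, p u ∈ S) (hph : ∀ u, d u (p u) = h u)
    (hd_nonneg : ∀ x y, 0 ≤ d x y)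
    (hle : ∀ x y, d x y ≤ dH x y)
    (hHtri : ∀ x y z, dH x z ≤ dH x y + dH y z)
    (hHsymm : ∀ x y, dH x y = dH y x)
    (hHp : ∀ u, dH u (p u) ≤ h u)
    (α β : ℝ) (hα : 1 ≤ α) (hβ : 1 ≤ β)
    (D : V → V → ℝ)
    (hD : ∀ s₁ ∈ S, ∀ s₂ ∈ S, dH s₁ s₂ ≤ D s₁ s₂ ∧ D s₁ s₂ ≤ β * dH s₁ s₂)
    (u v : V) (hspan : dH u v ≤ α * d u v)
    (hmax : max (h u) (h v) ≤ d u v) :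
    h u + D (p u) (p v) + h v ≤ (2 + β * (α + 2)) * d u v ∧
    (∀ k k' k'' : ℝ, α = 2 * k' - 1 → β = 2 * k'' - 1 →
      2 + (2 * k'' - 1) * (2 * k' + 1) ≤ 2 * k - 1 →
      h u + D (p u) (p v) + h v ≤ (2 * k - 1) * d u v) := by
  have hmain : h u + D (p u) (p v) + h v ≤ (2 + β * (α + 2)) * d u v := by
    have hhu : h u ≤ d u v := le_trans (le_max_left _ _) hmax
    have hhv : h v ≤ d u v := le_trans (le_max_right _ _) hmax
    have h1 : dH (p u) (p v) ≤ h u + α * d u v + h v := by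
      have t1 := hHtri (p u) u (p v)
      have t2 := hHtri u v (p v)
      have e1 : dH (p u) u = dH u (p u) := hHsymm _ _
      have e2 : dH v (p v) ≤ h v := hHp v
      have e3 : dH u (p u) ≤ h u := hHp u
      linarith
    have h2 : dH (p u) (p v) ≤ (α + 2) * d u v := by nlinarith
    have h3 := (hD (p u) (hp_mem u) (p v) (hp_mem v)).2
    have h4 : D (p u) (p v) ≤ β * ((α + 2) * d u v) := by
      refine le_trans h3 ?_
      have : 0 ≤ β := le_trans zero_le_one hβ
      nlinarith
    nlinarith
  refine ⟨hmain, ?_⟩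
  intro k k' k'' hα' hβ' hk
  have : (2 + β * (α + 2)) * d u v ≤ (2 * k - 1) * d u v := by
    apply mul_le_mul_of_nonneg_right _ (hd_nonneg u v)
    subst hα' hβ'; linarith
  linarith
end

section
/- Thorup–Zwick case split: with notation as above, for every integer 1 ≤ i ≤ k, at least one of the following holds: (a) min(h_i(u), h_i(v)) ≤ min(h_{i−1}(u), h_{i−1}(v)) + d(u,v); or (b) d̂(u,v) ≤ 2·min(h_{i−1}(u), h_{i−1}(v)) + d(u,v). -/
/-- Thorup–Zwick case split: for every `1 ≤ i ≤ k`, either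
`min(h_i(u), h_i(v)) ≤ min(h_{i−1}(u), h_{i−1}(v)) + d(u,v)`, or
`d̂(u,v) ≤ 2·min(h_{i−1}(u), h_{i−1}(v)) + d(u,v)`. -/
theorem stmt10 {V : Type*} (d : V → V → ℝ)
    (hd_symm : ∀ x y, d x y = d y x)
    (hd_tri : ∀ x y z, d x z ≤ d x y + d y z)
    (k : ℕ) (A : ℕ → Set V)
    (h : ℕ → V → ℝ) (p : ℕ → V → V)
    (hpA : ∀ i x, i < k → p i x ∈ A i)
    (hph : ∀ i x, i < k → d x (p i x) = h i x)
    (hA : ∀ i x y, y ∈ A i → h i x ≤ d x y)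
    (B : ℕ → V → Set V)
    (hB : ∀ i y, B i y = {w | w ∈ A i ∧ d y w < h (i + 1) y})
    (dhat : V → V → ℝ) (u v : V)
    (hquery : ∀ i j x y, ((x, y) = (u, v) ∨ (x, y) = (v, u)) →
      p i x ∈ B j y → dhat u v ≤ h i x + d (p i x) y)
    (i : ℕ) (hi1 : 1 ≤ i) (hik : i ≤ k) :
    min (h i u) (h i v) ≤ min (h (i - 1) u) (h (i - 1) v) + d u v ∨
    dhat u v ≤ 2 * min (h (i - 1) u) (h (i - 1) v) + d u v := by
  set j := i - 1 with hj
  have hji : j + 1 = i := Nat.sub_add_cancel hi1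
  have hjk : j < k := by omega
  rcases le_total (h j u) (h j v) with hle | hle
  · have hmin : min (h j u) (h j v) = h j u := min_eq_left hle
    by_cases hc : d v (p j u) < h i v
    · right
      have hmem : p j u ∈ B j v := by
        rw [hB]; exact ⟨hpA j u hjk, by rw [hji]; exact hc⟩
      have hq := hquery j j u v (Or.inl rfl) hmem
      have htr : d (p j u) v ≤ h j u + d u v :=
        calc d (p j u) v ≤ d (p j u) u + d u v := hd_tri _ _ _
        _ = h j u + d u v := by rw [hd_symm (p j u) u, hph j u hjk]
      rw [hmin]; linarith
    · left
      push_neg at hc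
      have h2 : d v (p j u) ≤ d v u + d u (p j u) := hd_tri _ _ _
      rw [hph j u hjk, hd_symm v u] at h2
      have h3 := min_le_right (h i u) (h i v)
      rw [hmin]; linarith
  · have hmin : min (h j u) (h j v) = h j v := min_eq_right hle
    by_cases hc : d u (p j v) < h i u
    · right
      have hmem : p j v ∈ B j u := by
        rw [hB]; exact ⟨hpA j v hjk, by rw [hji]; exact hc⟩
      have hq := hquery j j v u (Or.inr rfl) hmem
      have htr : d (p j v) u ≤ h j v + d u v :=
        calc d (p j v) u ≤ d (p j v) v + d v u := hd_tri _ _ _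
        _ = h j v + d u v := by rw [hd_symm (p j v) v, hph j v hjk, hd_symm v u]
      rw [hmin]; linarith
    · left
      push_neg at hc
      have h2 : d u (p j v) ≤ d u v + d v (p j v) := hd_tri _ _ _
      rw [hph j v hjk] at h2
      have h3 := min_le_left (h i u) (h i v)
      rw [hmin]; linarith
end

section
/- Hierarchical stretch lemma: Let d be the shortest-path metric of weighted graph G, and S_0 ⊇ S_1 ⊇ … ⊇ S_t a chain of subsets with G_{S_i} the corresponding truncated subgraphs. Suppose: (i) if P(u,v) ⊆ G_{S_0} then d̂(u,v) ≤ (2k−1)d(u,v); (ii) for each 1 ≤ i ≤ t, if P(u,v) ⊆ G_{S_i} then d̂(u,v) ≤ 2 min(h_{S_{i−1}}(u), h_{S_{i−1}}(v)) + (2k−3)d(u,v); and (iii) if P(u,v) ⊄ G_{S_i} then max(h_{S_i}(u), h_{S_i}(v)) ≤ d(u,v) (from the truncation lemma). Then for every pair u,v with P(u,v) ⊆ G_{S_t}, d̂(u,v) ≤ (2k−1)·d(u,v). -/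
/-- Hierarchical stretch lemma: given (i) a `(2k−1)`-guarantee when the shortest
path lies in `G_{S_0}`, (ii) a parameterized guarantee at each level `1 ≤ i ≤ t`
when the shortest path lies in `G_{S_i}`, and (iii) the truncation bound
`max(h_{S_i} u, h_{S_i} v) ≤ d(u,v)` when it does not lie in `G_{S_i}`, every
pair whose shortest path lies in `G_{S_t}` satisfies `d̂(u,v) ≤ (2k−1)·d(u,v)`. -/
theorem stmt13 {V : Type*} (d : V → V → ℝ) (hd_nonneg : ∀ x y, 0 ≤ d x y)
    (k : ℕ) (hk : 2 ≤ k) (t : ℕ)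
    (contained : ℕ → Prop) (h : ℕ → V → ℝ)
    (dhat : V → V → ℝ) (u v : V)
    (h0 : contained 0 → dhat u v ≤ (2 * (k : ℝ) - 1) * d u v)
    (hii : ∀ i, 1 ≤ i → i ≤ t → contained i →
      dhat u v ≤ 2 * min (h (i - 1) u) (h (i - 1) v) + (2 * (k : ℝ) - 3) * d u v)
    (hiii : ∀ i, i ≤ t → ¬ contained i → max (h i u) (h i v) ≤ d u v)
    (hct : contained t) :
    dhat u v ≤ (2 * (k : ℝ) - 1) * d u v := by
  classical
  have hex : ∃ j, contained j := ⟨t, hct⟩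
  set j := Nat.find hex with hj
  have hcj : contained j := Nat.find_spec hex
  have hjt : j ≤ t := Nat.find_min' hex hct
  rcases Nat.eq_zero_or_pos j with h0' | hpos
  · exact h0 (h0' ▸ hcj)
  · have hnc : ¬ contained (j - 1) := Nat.find_min hex (by omega)
    have hmax : max (h (j - 1) u) (h (j - 1) v) ≤ d u v :=
      hiii (j - 1) (by omega) hnc
    have hmin : min (h (j - 1) u) (h (j - 1) v) ≤ d u v :=
      le_trans (min_le_max) hmax
    have := hii j hpos hjt hcj
    nlinarith [this, hmin, hd_nonneg u v]
end

section
/- Composed-oracle approximation for unweighted graphs: Let d be the graph distance, S ⊆ V with h(u)=d(u,S) and p(u) a nearest S-vertex, and suppose h(u)+h(v) ≤ d(u,v)+1. Let H satisfy d ≤ d_H, d_H(u,p(u)) ≤ h(u), d_H(x,y) ≤ k′·d(x,y) + (k′−1) for all x,y, and let D: S×S → ℝ satisfy d_H(s₁,s₂) ≤ D(s₁,s₂) ≤ (2k″−1)·d_H(s₁,s₂). If 1 + (2k″−1)(k′+1) ≤ 2k−1, then d(u,v) ≤ h(u) + D(p(u),p(v)) + h(v) ≤ (2k−1)·d(u,v)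 + (2k−1). -/
/-- Composed-oracle approximation for unweighted graphs: with a `(k′,k′−1)`-spanner
`H` (augmented with pivot edges), a `(2k″−1)`-stretch oracle `D` on `S × S`,
`h u + h v ≤ d u v + 1`, and `1 + (2k″−1)(k′+1) ≤ 2k−1`, the estimate
`h u + D(p u, p v) + h v` lies between `d(u,v)` and `(2k−1)·d(u,v) + (2k−1)`. -/
theorem stmt17 {V : Type*} (d dH : V → V → ℝ) (S : Set V) (h : V → ℝ) (p : V → V)
    (hp_mem : ∀ u, p u ∈ S) (hph : ∀ u, d u (p u) = h u)
    (hd_nonneg : ∀ x y, 0 ≤ d x y)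
    (hle : ∀ x y, d x y ≤ dH x y)
    (hHtri : ∀ x y z, dH x z ≤ dH x y + dH y z)
    (hHsymm : ∀ x y, dH x y = dH y x)
    (hHp : ∀ u, dH u (p u) ≤ h u)
    (k k' k'' : ℕ) (hk' : 1 ≤ k') (hk'' : 1 ≤ k'')
    (hspan : ∀ x y, dH x y ≤ (k' : ℝ) * d x y + ((k' : ℝ) - 1))
    (D : V → V → ℝ)
    (hD : ∀ s₁ ∈ S, ∀ s₂ ∈ S, dH s₁ s₂ ≤ D s₁ s₂ ∧ D s₁ s₂ ≤ (2 * (k'' : ℝ) - 1) * dH s₁ s₂)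
    (u v : V)
    (hsum : h u + h v ≤ d u v + 1)
    (hcond : 1 + (2 * (k'' : ℝ) - 1) * ((k' : ℝ) + 1) ≤ 2 * (k : ℝ) - 1) :
    d u v ≤ h u + D (p u) (p v) + h v ∧
    h u + D (p u) (p v) + h v ≤ (2 * (k : ℝ) - 1) * d u v + (2 * (k : ℝ) - 1) := by
  obtain ⟨hD1, hD2⟩ := hD (p u) (hp_mem u) (p v) (hp_mem v)
  have hk'1 : (1 : ℝ) ≤ (k' : ℝ) := by exact_mod_cast hk'
  have hk''1 : (1 : ℝ) ≤ (k'' : ℝ) := by exact_mod_cast hk''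
  constructor
  · have t1 := hHtri u (p u) v
    have t2 := hHtri (p u) (p v) v
    have e1 : dH (p v) v = dH v (p v) := hHsymm _ _
    have := hle u v
    have := hHp u
    have := hHp v
    linarith
  · -- upper bound on dH (p u) (p v)
    have t1 := hHtri (p u) u (p v)
    have t2 := hHtri u v (p v)
    have e1 : dH (p u) u = dH u (p u) := hHsymm _ _
    have hA : dH (p u) (p v) ≤ ((k' : ℝ) + 1) * d u v + (k' : ℝ) := by
      have := hHp u
      have := hHp v
      have := hspan u v
      nlinarith
    have hA0 : 0 ≤ dH (p u) (p v) := le_trans (hd_nonneg _ _) (hle _ _)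
    have hDub : D (p u) (p v) ≤ (2 * (k'' : ℝ) - 1) * (((k' : ℝ) + 1) * d u v + (k' : ℝ)) := by
      calc D (p u) (p v) ≤ (2 * (k'' : ℝ) - 1) * dH (p u) (p v) := hD2
        _ ≤ (2 * (k'' : ℝ) - 1) * (((k' : ℝ) + 1) * d u v + (k' : ℝ)) := by nlinarith
    have hdnn := hd_nonneg u v
    nlinarith [mul_nonneg (by linarith : (0:ℝ) ≤ 2 * (k'' : ℝ) - 1) hdnn]
end
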